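/- Let g > 0, let e₃ = (0,0,1) ∈ ℝ³, let a ∈ ℝ³ with a + g e₃ ≠ 0, and let ψ ∈ ℝ with r_g = (cos ψ, sin ψ, 0). Define r₃ = (a + g e₃)/‖a + g e₃‖, assume r₃ × r_g ≠ 0, and define r₂ = (r₃ × r_g)/‖r₃ × r_g‖ and r₁ = r₂ × r₃. Then the 3 × 3 matrix R with columns r₁, r₂, r₃ is a rotation matrix: Rᵀ R = I and det R = 1. -/

import Mathlib

/-!
`r₃` and `r₂` are unit vectors, and `r₂ ⟂ r₃` because `r₂` is a multiple of `r₃ × r_g`. Hence the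
columns `(r₂ × r₃, r₂, r₃)` of `R` form an orthonormal frame: the cross product is orthogonal to its
factors, and Lagrange's identity `|u × w|² = |u|²|w|² - (u·w)²` makes `r₂ × r₃` a unit vector.
The same identity gives `det R = r₁ · (r₂ × r₃) = |r₂ × r₃|² = 1`.
-/

open Matrix

/-- The Euclidean norm on `ℝ³` (represented as `Fin 3 → ℝ`). -/
noncomputable def enorm3 (v : Fin 3 → ℝ) : ℝ :=
  Real.sqrt (v 0 ^ 2 + v 1 ^ 2 + v 2 ^ 2)

lemma enorm3_sq (v : Fin 3 → ℝ) : enorm3 v ^ 2 = v ⬝ᵥ v := by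
  rw [enorm3, Real.sq_sqrt (by positivity)]
  simp only [dotProduct, Fin.sum_univ_three]
  ring

lemma dotProduct_self_inv_enorm3_smul {v : Fin 3 → ℝ} (hv : v ≠ 0) :
    ((enorm3 v)⁻¹ • v) ⬝ᵥ ((enorm3 v)⁻¹ • v) = 1 := by
  have hvv : v ⬝ᵥ v ≠ 0 := fun h => hv (dotProduct_self_eq_zero.mp h)
  rw [smul_dotProduct, dotProduct_smul, smul_eq_mul, smul_eq_mul, ← mul_assoc, ← sq, inv_pow,
    enorm3_sq, inv_mul_cancel₀ hvv]

section CrossFrame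

variable {R : Type*} [CommRing R]

def crossFrame (u w : Fin 3 → R) : Matrix (Fin 3) (Fin 3) R :=
  Matrix.of ![u ⨯₃ w, u, w]

lemma det_crossFrame (u w : Fin 3 → R) :
    (crossFrame u w).det = (u ⬝ᵥ u) * (w ⬝ᵥ w) - (u ⬝ᵥ w) ^ 2 := by
  change Matrix.det ![u ⨯₃ w, u, w] = _
  rw [← triple_product_eq_det, cross_dot_cross, dotProduct_comm w u]
  ring

lemma crossFrame_mul_transpose {u w : Fin 3 → R} (hu : u ⬝ᵥ u = 1) (hw : w ⬝ᵥ w = 1)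
    (huw : u ⬝ᵥ w = 0) : crossFrame u w * (crossFrame u w)ᵀ = 1 := by
  have hcross : (u ⨯₃ w) ⬝ᵥ (u ⨯₃ w) = 1 := by
    rw [cross_dot_cross, hu, hw, huw, dotProduct_comm w u, huw]
    ring
  have hcross_u : (u ⨯₃ w) ⬝ᵥ u = 0 := by rw [dotProduct_comm, dot_self_cross]
  have hcross_w : (u ⨯₃ w) ⬝ᵥ w = 0 := by rw [dotProduct_comm, dot_cross_self]
  ext i j
  change ![u ⨯₃ w, u, w] i ⬝ᵥ ![u ⨯₃ w, u, w] j = _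
  fin_cases i <;> fin_cases j <;>
    simp [hu, hw, huw, hcross, hcross_u, hcross_w, dotProduct_comm w u]

end CrossFrame

theorem flatness_attitude_is_rotation_general (g : ℝ) (a : Fin 3 → ℝ)
    (e₃ : Fin 3 → ℝ)
    (rg : Fin 3 → ℝ)
    (ha : a + g • e₃ ≠ 0)
    (r₃ : Fin 3 → ℝ) (hr₃ : r₃ = (enorm3 (a + g • e₃))⁻¹ • (a + g • e₃))
    (hcross : crossProduct r₃ rg ≠ 0)
    (r₂ : Fin 3 → ℝ)
    (hr₂ : r₂ = (enorm3 (crossProduct r₃ rg))⁻¹ • (crossProduct r₃ rg))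
    (r₁ : Fin 3 → ℝ) (hr₁ : r₁ = crossProduct r₂ r₃)
    (R : Matrix (Fin 3) (Fin 3) ℝ)
    (hR : R = Matrix.of fun i j => ![r₁, r₂, r₃] j i) :
    Rᵀ * R = 1 ∧ R.det = 1 := by
  have hr₃_unit : r₃ ⬝ᵥ r₃ = 1 := hr₃ ▸ dotProduct_self_inv_enorm3_smul ha
  have hr₂_unit : r₂ ⬝ᵥ r₂ = 1 := hr₂ ▸ dotProduct_self_inv_enorm3_smul hcross
  have horth : r₂ ⬝ᵥ r₃ = 0 := by
    rw [hr₂, smul_dotProduct, dotProduct_comm, dot_self_cross, smul_zero]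
  have hR_frame : R = (crossFrame r₂ r₃)ᵀ := by
    rw [hR, hr₁]
    rfl
  refine ⟨?_, ?_⟩
  · rw [hR_frame, transpose_transpose]
    exact crossFrame_mul_transpose hr₂_unit hr₃_unit horth
  · rw [hR_frame, det_transpose, det_crossFrame, hr₂_unit, hr₃_unit, horth]
    norm_num

/-- Differential-flatness attitude reconstruction: with `r₃` the normalized thrust
direction `(a + g e₃)/‖a + g e₃‖`, `r₂ = (r₃ × r_g)/‖r₃ × r_g‖` and `r₁ = r₂ × r₃`,
the matrix `R` with columns `r₁, r₂, r₃` is a rotation matrix: `Rᵀ R = I` and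
`det R = 1`. -/
theorem flatness_attitude_is_rotation (g : ℝ) (hg : 0 < g) (a : Fin 3 → ℝ) (ψ : ℝ)
    (e₃ : Fin 3 → ℝ) (he₃ : e₃ = ![0, 0, 1])
    (rg : Fin 3 → ℝ) (hrg : rg = ![Real.cos ψ, Real.sin ψ, 0])
    (ha : a + g • e₃ ≠ 0)
    (r₃ : Fin 3 → ℝ) (hr₃ : r₃ = (enorm3 (a + g • e₃))⁻¹ • (a + g • e₃))
    (hcross : crossProduct r₃ rg ≠ 0)
    (r₂ : Fin 3 → ℝ)
    (hr₂ : r₂ = (enorm3 (crossProduct r₃ rg))⁻¹ • (crossProduct r₃ rg))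
    (r₁ : Fin 3 → ℝ) (hr₁ : r₁ = crossProduct r₂ r₃)
    (R : Matrix (Fin 3) (Fin 3) ℝ)
    (hR : R = Matrix.of fun i j => ![r₁, r₂, r₃] j i) :
    Rᵀ * R = 1 ∧ R.det = 1 :=
  flatness_attitude_is_rotation_general g a e₃ rg ha r₃ hr₃ hcross r₂ hr₂ r₁ hr₁ R hR
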